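/- arXiv:1208.0766 — 3 statements merged into one kernel-verified Lean document; each statement's English description precedes it below -/
import Mathlib

section
/- Let G be a finite group and let φ_H : A(G) → ℤ denote the mark homomorphism counting H-fixed points of a finite G-set, extended to the Burnside ring. Then the product map A(G) → ∏_{(H)} ℤ over conjugacy classes of subgroups (H) of G is an injective ring homomorphism. -/
/-- Sum action of `G` on `α ⊕ β`. -/
instance sumMulAction {G α β : Type*} [Group G] [MulAction G α] [MulAction G β] :
    MulAction G (α ⊕ β) where
  smul g x := x.map (g • ·) (g • ·)
  one_smul x := by cases x <;> simp [HSMul.hSMul, SMul.smul] <;> exact one_smul _ _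
  mul_smul g h x := by cases x <;> simp [HSMul.hSMul, SMul.smul] <;> exact mul_smul _ _ _

/-- The mark of a finite `G`-set `α` at a subgroup `H`: the number of `H`-fixed points. -/
noncomputable def mark {G : Type*} [Group G] (H : Subgroup G) (α : Type*) [MulAction G α] : ℕ :=
  Nat.card {x : α // ∀ h ∈ H, h • x = x}

/-!
Marks are additive and multiplicative because the `H`-fixed points of a disjoint union (a product)
are the disjoint union (the product) of the `H`-fixed points.

Injectivity is proved by induction on `|α|`. Choose `x ∈ α` whose stabilizer `H` is maximal among
the stabilizers of points of `α`. Since `φ_H(β) = φ_H(α) > 0`, some `y ∈ β` has stabilizer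
`K ≥ H`; symmetrically `φ_K(α) > 0` puts `K` below the stabilizer of a point of `α`, so maximality
forces `K = H`. The orbits of `x` and `y` are then both isomorphic to `G ⧸ H`, and removing them
leaves two smaller `G`-sets with equal marks.
-/

open MulAction

section

variable {G : Type*} [Group G] {α β : Type*} [MulAction G α] [MulAction G β]

theorem mark_eq_card_le_stabilizer (H : Subgroup G) :
    mark H α = Nat.card {x : α // H ≤ stabilizer G x} :=
  rfl

theorem mark_pos_iff [Finite α] {H : Subgroup G} :
    0 < mark H α ↔ ∃ x : α, H ≤ stabilizer G x := by
  rw [mark_eq_card_le_stabilizer, Nat.card_pos_iff, and_iff_left Subtype.finite, nonempty_subtype]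

theorem mark_bot : mark (⊥ : Subgroup G) α = Nat.card α := by
  simp [mark_eq_card_le_stabilizer]

theorem stabilizer_sumInl (a : α) : stabilizer G (Sum.inl a : α ⊕ β) = stabilizer G a := by
  ext g
  exact Sum.inl_injective.eq_iff

theorem stabilizer_sumInr (b : β) : stabilizer G (Sum.inr b : α ⊕ β) = stabilizer G b := by
  ext g
  exact Sum.inr_injective.eq_iff

theorem stabilizer_prodMk (a : α) (b : β) :
    stabilizer G (a, b) = stabilizer G a ⊓ stabilizer G b := by
  ext g
  exact Prod.ext_iff

theorem mark_sum [Finite α] [Finite β] (H : Subgroup G) :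
    mark H (α ⊕ β) = mark H α + mark H β := by
  simp only [mark_eq_card_le_stabilizer, Nat.card_congr Equiv.subtypeSum, Nat.card_sum,
    stabilizer_sumInl, stabilizer_sumInr]

theorem mark_prod (H : Subgroup G) : mark H (α × β) = mark H α * mark H β := by
  rw [mark_eq_card_le_stabilizer, mark_eq_card_le_stabilizer, mark_eq_card_le_stabilizer,
    ← Nat.card_prod]
  refine Nat.card_congr ((Equiv.subtypeEquivRight fun x => ?_).trans Equiv.subtypeProdEquivProd)
  rw [← le_inf_iff, ← stabilizer_prodMk]

variable (G) in
def EquivariantlyEquivalent (α β : Type*) [MulAction G α] [MulAction G β] : Prop :=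
  ∃ e : α ≃ β, ∀ (g : G) (x : α), e (g • x) = g • e x

namespace EquivariantlyEquivalent

theorem symm : EquivariantlyEquivalent G α β → EquivariantlyEquivalent G β α := by
  rintro ⟨e, he⟩
  refine ⟨e.symm, fun g y => e.injective ?_⟩
  rw [he, e.apply_symm_apply, e.apply_symm_apply]

theorem trans {γ : Type*} [MulAction G γ] :
    EquivariantlyEquivalent G α β → EquivariantlyEquivalent G β γ →
      EquivariantlyEquivalent G α γ := by
  rintro ⟨e, he⟩ ⟨f, hf⟩
  exact ⟨e.trans f, fun g x => by simp only [Equiv.trans_apply, he, hf]⟩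

theorem sum {α' β' : Type*} [MulAction G α'] [MulAction G β']
    (h : EquivariantlyEquivalent G α β) (h' : EquivariantlyEquivalent G α' β') :
    EquivariantlyEquivalent G (α ⊕ α') (β ⊕ β') := by
  obtain ⟨e, he⟩ := h
  obtain ⟨e', he'⟩ := h'
  refine ⟨Equiv.sumCongr e e', fun g x => ?_⟩
  cases x with
  | inl a => exact congrArg Sum.inl (he g a)
  | inr a => exact congrArg Sum.inr (he' g a)

theorem mark_eq (h : EquivariantlyEquivalent G α β) (H : Subgroup G) : mark H α = mark H β := by
  obtain ⟨e, he⟩ := h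
  refine Nat.card_congr (e.subtypeEquiv fun x => ?_)
  simp only [← he, e.injective.eq_iff]

end EquivariantlyEquivalent

theorem SubMulAction.equivariantlyEquivalent_sum_compl (p : SubMulAction G α) :
    EquivariantlyEquivalent G (p ⊕ ↥pᶜ) α := by
  classical
  exact ⟨Equiv.sumCompl (· ∈ p), fun _ x => by cases x <;> rfl⟩

theorem SubMulAction.mark_eq_add_mark_compl [Finite α] (p : SubMulAction G α) (H : Subgroup G) :
    mark H α = mark H p + mark H ↥pᶜ := by
  rw [← mark_sum, p.equivariantlyEquivalent_sum_compl.mark_eq]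

variable (G) in
def MulAction.orbitSubMulAction (x : α) : SubMulAction G α where
  carrier := orbit G x
  smul_mem' g _ hy := mapsTo_smul_orbit g x hy

theorem MulAction.equivariantlyEquivalent_orbit_quotient_stabilizer (x : α) :
    EquivariantlyEquivalent G (orbitSubMulAction G x) (G ⧸ stabilizer G x) := by
  refine EquivariantlyEquivalent.symm ⟨(orbitEquivQuotientStabilizer G x).symm, fun g q => ?_⟩
  induction q using QuotientGroup.induction_on with
  | H k => exact Subtype.ext (mul_smul g k x)

theorem MulAction.equivariantlyEquivalent_orbit_of_stabilizer_eq {x : α} {y : β}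
    (h : stabilizer G x = stabilizer G y) :
    EquivariantlyEquivalent G (orbitSubMulAction G x) (orbitSubMulAction G y) := by
  refine (equivariantlyEquivalent_orbit_quotient_stabilizer x).trans
    (EquivariantlyEquivalent.trans ?_ (equivariantlyEquivalent_orbit_quotient_stabilizer y).symm)
  refine ⟨Subgroup.quotientEquivOfEq h, fun g q => ?_⟩
  induction q using QuotientGroup.induction_on with
  | H k => rfl

theorem exists_stabilizer_eq_of_mark_eq [Finite α] [Finite β] [Nonempty α]
    (h : ∀ H : Subgroup G, mark H α = mark H β) :
    ∃ (x : α) (y : β), stabilizer G x = stabilizer G y := by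
  obtain ⟨x, -, hmax⟩ := Set.finite_univ.exists_maximalFor (stabilizer G : α → Subgroup G)
    Set.univ Set.univ_nonempty
  obtain ⟨y, hxy⟩ : ∃ y : β, stabilizer G x ≤ stabilizer G y := by
    rw [← mark_pos_iff, ← h, mark_pos_iff]
    exact ⟨x, le_rfl⟩
  obtain ⟨x', hyx'⟩ : ∃ x' : α, stabilizer G y ≤ stabilizer G x' := by
    rw [← mark_pos_iff, h, mark_pos_iff]
    exact ⟨y, le_rfl⟩
  exact ⟨x, y, hxy.antisymm (hyx'.trans (hmax (Set.mem_univ x') (hxy.trans hyx')))⟩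

theorem equivariantlyEquivalent_of_mark_eq [Finite α] [Finite β]
    (h : ∀ H : Subgroup G, mark H α = mark H β) : EquivariantlyEquivalent G α β := by
  induction hn : Nat.card α using Nat.strong_induction_on generalizing α β with
  | _ n ih =>
  rcases isEmpty_or_nonempty α with hα | hα
  · have : IsEmpty β := by
      rw [← Finite.card_eq_zero_iff, ← mark_bot (G := G), ← h, mark_bot, Finite.card_eq_zero_iff]
      exact hα
    exact ⟨Equiv.equivOfIsEmpty α β, fun _ x => isEmptyElim x⟩
  obtain ⟨x, y, hxy⟩ := exists_stabilizer_eq_of_mark_eq h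
  set p := orbitSubMulAction G x
  set q := orbitSubMulAction G y
  have horbit : EquivariantlyEquivalent G p q := equivariantlyEquivalent_orbit_of_stabilizer_eq hxy
  have hcompl : ∀ H : Subgroup G, mark H ↥pᶜ = mark H ↥qᶜ := fun H => by
    have := h H
    rwa [p.mark_eq_add_mark_compl, q.mark_eq_add_mark_compl, horbit.mark_eq, add_right_inj] at this
  have hcard : Nat.card ↥pᶜ < n := by
    have hp : 0 < Nat.card p := Nat.card_pos_iff.mpr ⟨⟨⟨x, mem_orbit_self x⟩⟩, inferInstance⟩
    have := p.mark_eq_add_mark_compl ⊥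
    rw [mark_bot, mark_bot, mark_bot, hn] at this
    omega
  exact p.equivariantlyEquivalent_sum_compl.symm.trans
    ((horbit.sum (ih _ hcard hcompl rfl)).trans q.equivariantlyEquivalent_sum_compl)

end

theorem marks_injective_ring_hom_general {G : Type*} [Group G]
    (α β : Type*) [Finite α] [Finite β] [MulAction G α] [MulAction G β] :
    (∀ H : Subgroup G, mark H (α ⊕ β) = mark H α + mark H β) ∧
    (∀ H : Subgroup G, mark H (α × β) = mark H α * mark H β) ∧
    ((∀ H : Subgroup G, mark H α = mark H β) →
      ∃ e : α ≃ β, ∀ (g : G) (x : α), e (g • x) = g • e x) :=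
  ⟨mark_sum, mark_prod, equivariantlyEquivalent_of_mark_eq⟩

/-- the family of marks `φ_H : A(G) → ℤ` assembles into an injective ring
homomorphism on the Burnside ring: marks are additive under disjoint union, multiplicative
under cartesian product, and two finite `G`-sets with the same marks at all subgroups are
`G`-equivariantly isomorphic. -/
theorem marks_injective_ring_hom {G : Type*} [Group G] [Finite G]
    (α β : Type*) [Finite α] [Finite β] [MulAction G α] [MulAction G β] :
    (∀ H : Subgroup G, mark H (α ⊕ β) = mark H α + mark H β) ∧
    (∀ H : Subgroup G, mark H (α × β) = mark H α * mark H β) ∧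
    ((∀ H : Subgroup G, mark H α = mark H β) →
      ∃ e : α ≃ β, ∀ (g : G) (x : α), e (g • x) = g • e x) :=
  marks_injective_ring_hom_general α β
end

section
/- Let G be a nontrivial finite group. There exists a nonzero element x of the Burnside ring A(G) such that φ_H(x) = 0 for every subgroup H ≤ G with H ≠ G, where φ_H denotes the mark homomorphism. Concretely, x can be taken as the product over representatives K of conjugacy classes of proper subgroups of G of the elements u_K = [G/K] − |(G/K)^K|·[G/G]. -/
/-- The mark of the `G`-set `G/K` at a subgroup `H`: the number of `H`-fixed cosets. -/
noncomputable def quotMark' {G : Type*} [Group G] (H K : Subgroup G) : ℕ :=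
  Nat.card {x : G ⧸ K // ∀ h ∈ H, h • x = x}

/-- Two subgroups are conjugate. -/
def SubConj {G : Type*} [Group G] (H K : Subgroup G) : Prop :=
  ∃ g : G, Subgroup.map (MulAut.conj g).toMonoidHom H = K

section Aux
variable {G : Type*} [Group G]

lemma map_conj_conj (g g' : G) (H : Subgroup G) :
    Subgroup.map (MulAut.conj g).toMonoidHom (Subgroup.map (MulAut.conj g').toMonoidHom H)
      = Subgroup.map (MulAut.conj (g * g')).toMonoidHom H := by
  rw [Subgroup.map_map]
  congr 1
  ext x
  simp [mul_assoc]

lemma map_conj_one (H : Subgroup G) :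
    Subgroup.map (MulAut.conj (1 : G)).toMonoidHom H = H := by
  ext x; simp

lemma subconj_refl (H : Subgroup G) : SubConj H H := ⟨1, map_conj_one H⟩

lemma subconj_symm {H K : Subgroup G} (h : SubConj H K) : SubConj K H := by
  obtain ⟨g, hg⟩ := h
  exact ⟨g⁻¹, by rw [← hg, map_conj_conj, inv_mul_cancel, map_conj_one]⟩

lemma subconj_trans {H K L : Subgroup G} (h : SubConj H K) (h' : SubConj K L) : SubConj H L := by
  obtain ⟨g, hg⟩ := h; obtain ⟨g', hg'⟩ := h'
  exact ⟨g' * g, by rw [← map_conj_conj, hg, hg']⟩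

lemma subconj_top {H : Subgroup G} (h : SubConj H ⊤) : H = ⊤ := by
  obtain ⟨g, hg⟩ := subconj_symm h
  rw [← hg, Subgroup.map_top_of_surjective]
  exact (MulAut.conj g).surjective

lemma quotMark'_top_eq_zero [Fintype G] {K : Subgroup G} (hK : K ≠ ⊤) :
    quotMark' (⊤ : Subgroup G) K = 0 := by
  rw [quotMark', Nat.card_eq_zero]
  left
  constructor
  rintro ⟨x, hx⟩
  obtain ⟨g, rfl⟩ := QuotientGroup.mk_surjective x
  apply hK
  ext k
  simp only [Subgroup.mem_top, iff_true]
  have := hx (g * k * g⁻¹) trivial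
  have h2 : ((g * k * g⁻¹ * g : G) : G ⧸ K) = (g : G ⧸ K) := by
    simpa [QuotientGroup.mk_mul_of_mem] using this
  rw [QuotientGroup.eq] at h2
  simpa using h2

lemma quotMark'_self_pos [Fintype G] (K : Subgroup G) : 0 < quotMark' K K := by
  rw [quotMark']
  have : Nonempty {x : G ⧸ K // ∀ h ∈ K, h • x = x} := by
    refine ⟨⟨((1 : G) : G ⧸ K), fun h hh => ?_⟩⟩
    show ((h * 1 : G) : G ⧸ K) = ((1 : G) : G ⧸ K)
    rw [QuotientGroup.eq]
    simpa using hh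
  have : Finite {x : G ⧸ K // ∀ h ∈ K, h • x = x} := Subtype.finite
  exact Nat.card_pos

lemma quotMark'_conj (g : G) (H K : Subgroup G) :
    quotMark' (Subgroup.map (MulAut.conj g).toMonoidHom H) K = quotMark' H K := by
  apply Nat.card_congr
  refine ⟨fun x => ⟨g⁻¹ • x.1, ?_⟩, fun y => ⟨g • y.1, ?_⟩, ?_, ?_⟩
  · intro h hh
    have := x.2 (g * h * g⁻¹) (by
      exact ⟨h, hh, by simp⟩)
    calc h • g⁻¹ • x.1 = g⁻¹ • (g * h * g⁻¹) • x.1 := by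
          rw [smul_smul, smul_smul]; congr 1; group
      _ = g⁻¹ • x.1 := by rw [this]
  · intro h hh
    obtain ⟨h₀, hh₀, rfl⟩ := hh
    have := y.2 h₀ hh₀
    show (g * h₀ * g⁻¹) • g • y.1 = g • y.1
    calc (g * h₀ * g⁻¹) • g • y.1 = g • h₀ • y.1 := by
          rw [smul_smul, smul_smul]; congr 1; group
      _ = g • y.1 := by rw [this]
  · intro x; ext; simp
  · intro y; ext; simp

lemma quotMark'_of_subconj {H K : Subgroup G} (h : SubConj H K) :
    quotMark' H K = quotMark' K K := by
  obtain ⟨g, hg⟩ := h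
  rw [← hg, quotMark'_conj]

end Aux

/-- for a nontrivial finite group `G` there is a nonzero element `x` of the
Burnside ring `A(G)` (recorded here by its vector of marks `φ_H(x)`) with `φ_H(x) = 0` for
every proper subgroup `H`.  Concretely, `x = ∏_K u_K` where `K` runs over representatives
of conjugacy classes of proper subgroups and `u_K = [G/K] - |(G/K)^K|·[G/G]`, so that
`φ_H(x) = ∏_K (|(G/K)^H| - |(G/K)^K|)`. -/
theorem exists_bartsch_element {G : Type*} [Group G] [Fintype G] [Nontrivial G] :
    ∃ reps : Finset (Subgroup G),
      (∀ K ∈ reps, K ≠ ⊤) ∧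
      (∀ K : Subgroup G, K ≠ ⊤ → ∃! K', K' ∈ reps ∧ SubConj K K') ∧
      (fun H : Subgroup G => ∏ K ∈ reps, ((quotMark' H K : ℤ) - (quotMark' K K : ℤ))) ≠ 0 ∧
      (∀ H : Subgroup G, H ≠ ⊤ →
        ∏ K ∈ reps, ((quotMark' H K : ℤ) - (quotMark' K K : ℤ)) = 0) := by
  classical
  let s : Setoid (Subgroup G) :=
    ⟨SubConj, ⟨subconj_refl, subconj_symm, subconj_trans⟩⟩
  let reps : Finset (Subgroup G) :=
    (Finset.univ.filter (fun K : Subgroup G => K ≠ ⊤)).image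
      (fun K => (Quotient.mk s K).out)
  have hout : ∀ K : Subgroup G, SubConj ((Quotient.mk s K).out) K := by
    intro K
    exact Quotient.exact (Quotient.out_eq (Quotient.mk s K))
  have hne : ∀ K ∈ reps, K ≠ ⊤ := by
    intro K hK
    simp only [reps, Finset.mem_image, Finset.mem_filter] at hK
    obtain ⟨L, ⟨-, hL⟩, rfl⟩ := hK
    intro htop
    exact hL (subconj_top (subconj_trans (subconj_symm (hout L)) (htop ▸ subconj_refl _)))
  refine ⟨reps, hne, ?_, ?_, ?_⟩
  · intro K hK
    refine ⟨(Quotient.mk s K).out, ⟨?_, subconj_symm (hout K)⟩, ?_⟩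
    · simp only [reps, Finset.mem_image, Finset.mem_filter]
      exact ⟨K, ⟨Finset.mem_univ _, hK⟩, rfl⟩
    · rintro K' ⟨hK', hconj⟩
      simp only [reps, Finset.mem_image, Finset.mem_filter] at hK'
      obtain ⟨L, -, rfl⟩ := hK'
      have h1 : Quotient.mk s K = Quotient.mk s L := by
        exact Quotient.sound (subconj_trans hconj (hout L))
      rw [h1]
  · intro h0
    have := congrFun h0 (⊤ : Subgroup G)
    simp only [Pi.zero_apply] at this
    rw [Finset.prod_eq_zero_iff] at this
    obtain ⟨K, hK, hzero⟩ := this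
    rw [quotMark'_top_eq_zero (hne K hK)] at hzero
    have := quotMark'_self_pos (G := G) K
    omega
  · intro H hH
    apply Finset.prod_eq_zero (i := (Quotient.mk s H).out)
    · simp only [reps, Finset.mem_image, Finset.mem_filter]
      exact ⟨H, ⟨Finset.mem_univ _, hH⟩, rfl⟩
    · rw [quotMark'_of_subconj (subconj_symm (hout H))]
      ring
end

section
/- Let G be a finite p-group. Then the kernel of the completion map A(G) → A(G)^∧_{I_G} at the augmentation ideal I_G = ker(φ_e : A(G) → ℤ) is zero; equivalently, ⋂_{n ≥ 1} I_G^n = 0 in A(G). -/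
set_option synthInstance.maxHeartbeats 1000000
set_option maxHeartbeats 1000000

/-- The vector of marks of the finite `G`-set given by a permutation representation
`ρ : G →* S_n` on `Fin n`: at a subgroup `H` it records the number of `H`-fixed points. -/
noncomputable def markVector (G : Type*) [Group G] (n : ℕ) (ρ : G →* Equiv.Perm (Fin n)) :
    Subgroup G → ℤ :=
  fun H => (Nat.card {x : Fin n // ∀ h ∈ H, ρ h x = x} : ℤ)

/-- The Burnside ring `A(G)`, realized via the (injective) marks homomorphism as the subring
of `∏_{H ≤ G} ℤ` generated by the mark vectors of all finite `G`-sets. -/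
noncomputable def BurnsideRing (G : Type*) [Group G] : Subring (Subgroup G → ℤ) :=
  Subring.closure {f | ∃ (n : ℕ) (ρ : G →* Equiv.Perm (Fin n)), f = markVector G n ρ}

/-- The augmentation ideal `I_G = ker(φ_e : A(G) → ℤ)`, the kernel of the mark at the
trivial subgroup. -/
noncomputable def augIdeal (G : Type*) [Group G] : Ideal (BurnsideRing G) :=
  RingHom.ker (((Pi.evalRingHom (fun _ : Subgroup G => ℤ) ⊥)).comp (BurnsideRing G).subtype)

lemma coord_sub_dvd {G : Type*} [Group G] (p : ℕ) [Fact p.Prime] (hG : IsPGroup p G)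
    {x : Subgroup G → ℤ} (hx : x ∈ BurnsideRing G) (H : Subgroup G) :
    (p : ℤ) ∣ x H - x ⊥ := by
  induction hx using Subring.closure_induction with
  | mem f hf =>
    obtain ⟨n, ρ, rfl⟩ := hf
    have hbot : markVector G n ρ ⊥ = n := by
      unfold markVector
      rw [Nat.card_congr (Equiv.subtypeUnivEquiv ?_), Nat.card_eq_fintype_card, Fintype.card_fin]
      intro x h hh
      rw [Subgroup.mem_bot] at hh
      subst hh; simp
    rw [hbot]
    letI : MulAction H (Fin n) := MulAction.compHom (Fin n) (ρ.comp H.subtype)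
    have hmod := (hG.to_subgroup H).card_modEq_card_fixedPoints (Fin n)
    have hcard : markVector G n ρ H = (Nat.card (MulAction.fixedPoints H (Fin n)) : ℤ) := by
      unfold markVector
      congr 1
      apply Nat.card_congr
      apply Equiv.subtypeEquivRight
      intro x
      constructor
      · intro h g; exact h g.1 g.2
      · intro h g hg; exact h ⟨g, hg⟩
    rw [hcard]
    have h2 : ((Nat.card (Fin n) : ℕ) : ℤ) ≡ (Nat.card (MulAction.fixedPoints H (Fin n)) : ℤ) [ZMOD (p : ℕ)] := Int.natCast_modEq_iff.mpr hmod
    have := Int.ModEq.dvd h2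
    simpa [Nat.card_eq_fintype_card] using this
  | zero => simp
  | one => simp
  | add x y hx hy ihx ihy =>
    have : (x + y) H - (x + y) ⊥ = (x H - x ⊥) + (y H - y ⊥) := by simp [Pi.add_apply]; ring
    rw [this]; exact dvd_add ihx ihy
  | neg x hx ihx =>
    have : (-x) H - (-x) ⊥ = -(x H - x ⊥) := by simp; ring
    rw [this]; exact dvd_neg.mpr ihx
  | mul x y hx hy ihx ihy =>
    have : (x * y) H - (x * y) ⊥ = x H * (y H - y ⊥) + y ⊥ * (x H - x ⊥) := by
      simp [Pi.mul_apply]; ring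
    rw [this]; exact dvd_add (Dvd.dvd.mul_left ihy _) (Dvd.dvd.mul_left ihx _)

/-- for a finite `p`-group `G` the `I_G`-adic topology on `A(G)` is Hausdorff:
`⋂_{n ≥ 1} I_G^n = 0`, i.e. the completion map `A(G) → A(G)^∧_{I_G}` is injective. -/
theorem burnside_ring_iInf_augIdeal_pow_eq_bot
    {G : Type*} [Group G] [Fintype G] (p : ℕ) [Fact p.Prime] (hG : IsPGroup p G) :
    (⨅ n : ℕ, (augIdeal G) ^ (n + 1)) = ⊥ := by
  have key : ∀ (n : ℕ) (y : BurnsideRing G), y ∈ (augIdeal G) ^ n →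
      ∀ H, (p : ℤ) ^ n ∣ (y : Subgroup G → ℤ) H := by
    intro n
    induction n with
    | zero => intro y _ H; simp
    | succ n ih =>
      intro y hy H
      rw [pow_succ] at hy
      refine Submodule.mul_induction_on hy ?_ ?_
      · intro m hm r hr
        have h1 := ih m hm H
        have hr0 : (r : Subgroup G → ℤ) ⊥ = 0 := by
          rw [augIdeal, RingHom.mem_ker] at hr; exact hr
        have h2 : (p : ℤ) ∣ (r : Subgroup G → ℤ) H := by
          have := coord_sub_dvd p hG r.2 H
          rwa [hr0, sub_zero] at this
        have hval : ((m * r : BurnsideRing G) : Subgroup G → ℤ) H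
            = (m : Subgroup G → ℤ) H * (r : Subgroup G → ℤ) H := rfl
        rw [hval, pow_succ]
        exact mul_dvd_mul h1 h2
      · intro a b ha hb
        have hval : ((a + b : BurnsideRing G) : Subgroup G → ℤ) H
            = (a : Subgroup G → ℤ) H + (b : Subgroup G → ℤ) H := rfl
        rw [hval]
        exact dvd_add ha hb
  rw [eq_bot_iff]
  intro x hx
  rw [Submodule.mem_iInf] at hx
  have hzero : ∀ H, (x : Subgroup G → ℤ) H = 0 := by
    intro H
    by_contra h
    have hp1 : (1 : ℤ) < (p : ℤ) := by exact_mod_cast (Fact.out : p.Prime).one_lt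
    obtain ⟨n, hn⟩ := pow_unbounded_of_one_lt (|(x : Subgroup G → ℤ) H|) hp1
    have hd : (p : ℤ) ^ n ∣ (x : Subgroup G → ℤ) H := by
      exact (pow_dvd_pow _ (Nat.le_succ n)).trans (key (n + 1) x (hx n) H)
    have hle := Int.le_of_dvd (abs_pos.mpr h) ((dvd_abs _ _).mpr hd)
    exact absurd hn (not_lt.mpr hle)
  exact (Submodule.mem_bot _).mpr (Subtype.ext (funext hzero))
end
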